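/- Let C be a closed convex subset of a real Hilbert space and T : C → C a λ-strict pseudocontraction with F(T) ≠ ∅. Let u, x_0 ∈ C and x_{n+1} = β_n u + (1 − β_n)[α_n T x_n + (1 − α_n) x_n], where α_n ∈ [0, 2λ] with liminf α_n(2λ − α_n) > 0, and β_n ∈ (0,1) with β_n → 0 and ∑ β_n = ∞. Then {x_n} converges strongly to a fixed point of T. -/

import Mathlib

/-!
Strict pseudocontractivity makes `S = lam • T + (1 - lam) • id` nonexpansive on `C`, and `S` has
the same fixed points as `T`; so `F = C ∩ Fix T` is closed and convex, and `z = P_F u` satisfies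
`⟪u - z, p - z⟫ ≤ 0` on `F`. For `aₙ = ‖xₙ - z‖²` the recursion gives
`aₙ₊₁ ≤ (1 - βₙ) aₙ + 2 βₙ ⟪u - z, xₙ₊₁ - z⟫` and
`(1 - βₙ) αₙ (2 lam - αₙ) ‖xₙ - T xₙ‖² ≤ βₙ ‖u - z‖² + aₙ - aₙ₊₁`.
Along any `φ → ∞` on which `a` asymptotically does not decrease, the second inequality forces
`x_φ - T x_φ → 0`, and demiclosedness of `I - S` (weak limits along ultrafilters, via the Riesz
representation) gives `limsup ⟪u - z, x_{φ+1} - z⟫ ≤ 0`. Maingé's dichotomy — `a` eventually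
nonincreasing, or else follow the last ascent `τ n ≤ n` — then turns the first inequality into
`aₙ → 0`, using `∑ βₙ = ∞` in the first case.
-/

open Filter Topology Function Finset
open scoped RealInnerProductSpace

theorem ContinuousOn.isClosed_inter_fixedPoints {X : Type*} [TopologicalSpace X] [T2Space X]
    {f : X → X} {s : Set X} (hf : ContinuousOn f s) (hs : IsClosed s) :
    IsClosed (s ∩ fixedPoints f) :=
  (hf.prodMk continuousOn_id).preimage_isClosed_of_isClosed hs isClosed_diagonal

theorem LipschitzOnWith.convex_inter_fixedPoints {E : Type*} [NormedAddCommGroup E]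
    [NormedSpace ℝ E] [StrictConvexSpace ℝ E] {f : E → E} {s : Set E}
    (hf : LipschitzOnWith 1 f s) (hs : Convex ℝ s) : Convex ℝ (s ∩ fixedPoints f) := by
  rintro p ⟨hps, hp⟩ q ⟨hqs, hq⟩ a b ha hb hab
  obtain rfl : a = 1 - b := by linarith
  have hms := hs hps hqs ha hb hab
  rw [← AffineMap.lineMap_apply_module] at hms ⊢
  set m := AffineMap.lineMap p q b
  refine ⟨hms, ?_⟩
  have hdist : ∀ y ∈ s, dist (f m) (f y) ≤ dist m y := fun y hy => by
    simpa using hf.dist_le_mul m hms y hy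
  have hp' := hdist p hps
  have hq' := hdist q hqs
  rw [hp.eq, dist_lineMap_left, Real.norm_of_nonneg hb] at hp'
  rw [hq.eq, dist_lineMap_right, Real.norm_of_nonneg ha] at hq'
  -- `f m` lies within `b * dist p q` of `p` and `(1 - b) * dist p q` of `q`, so the triangle
  -- inequality is an equality, which in a strictly convex space pins `f m` to `m`
  have htri := dist_triangle p (f m) q
  rw [dist_comm] at hp'
  exact eq_lineMap_of_dist_eq_mul_of_dist_eq_mul (by linarith) (by linarith)

theorem fixedPoints_averaged {R E : Type*} [Field R] [AddCommGroup E] [Module R E] (T : E → E)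
    {lam : R} (hlam : lam ≠ 0) :
    fixedPoints (fun w => lam • T w + (1 - lam) • w) = fixedPoints T := by
  ext p
  have h : lam • T p + (1 - lam) • p - p = lam • (T p - p) := by module
  simp only [mem_fixedPoints, IsFixedPt]
  rw [← sub_eq_zero, h, smul_eq_zero, sub_eq_zero, or_iff_right hlam]

section StrictPseudocontraction

variable {H : Type*} [NormedAddCommGroup H] [InnerProductSpace ℝ H]

def IsStrictPseudocontractionOn (T : H → H) (lam : ℝ) (C : Set H) : Prop :=
  ∀ x ∈ C, ∀ y ∈ C, ⟪T x - T y, x - y⟫ ≤ ‖x - y‖ ^ 2 - lam * ‖(x - y) - (T x - T y)‖ ^ 2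

variable {T : H → H} {lam : ℝ} {C : Set H} {x y : H}

theorem IsStrictPseudocontractionOn.norm_sub_smul_sq_le (hT : IsStrictPseudocontractionOn T lam C)
    (hx : x ∈ C) (hy : y ∈ C) {t : ℝ} (ht : 0 ≤ t) :
    ‖(x - y) - t • ((x - y) - (T x - T y))‖ ^ 2 ≤
      ‖x - y‖ ^ 2 - t * (2 * lam - t) * ‖(x - y) - (T x - T y)‖ ^ 2 := by
  have hinner : lam * ‖(x - y) - (T x - T y)‖ ^ 2 ≤ ⟪x - y, (x - y) - (T x - T y)⟫ := by
    rw [inner_sub_right, real_inner_self_eq_norm_sq, real_inner_comm]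
    linarith [hT x hx y hy]
  rw [norm_sub_sq_real, real_inner_smul_right, norm_smul, Real.norm_of_nonneg ht, mul_pow]
  nlinarith [mul_le_mul_of_nonneg_left hinner ht]

theorem IsStrictPseudocontractionOn.lipschitzOnWith_averaged
    (hT : IsStrictPseudocontractionOn T lam C) (hlam : 0 ≤ lam) :
    LipschitzOnWith 1 (fun w => lam • T w + (1 - lam) • w) C := by
  refine LipschitzOnWith.of_dist_le_mul fun x hx y hy => ?_
  have h := hT.norm_sub_smul_sq_le hx hy hlam
  rw [show x - y - lam • (x - y - (T x - T y)) =
    lam • T x + (1 - lam) • x - (lam • T y + (1 - lam) • y) by module] at h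
  rw [NNReal.coe_one, one_mul, dist_eq_norm, dist_eq_norm,
    ← pow_le_pow_iff_left₀ (norm_nonneg _) (norm_nonneg _) two_ne_zero]
  nlinarith [mul_nonneg (mul_self_nonneg lam) (sq_nonneg ‖x - y - (T x - T y)‖)]

theorem IsStrictPseudocontractionOn.isClosed_inter_fixedPoints
    (hT : IsStrictPseudocontractionOn T lam C) (hlam : 0 < lam) (hC : IsClosed C) :
    IsClosed (C ∩ fixedPoints T) := by
  rw [← fixedPoints_averaged T hlam.ne']
  exact (hT.lipschitzOnWith_averaged hlam.le).continuousOn.isClosed_inter_fixedPoints hC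

theorem IsStrictPseudocontractionOn.convex_inter_fixedPoints
    (hT : IsStrictPseudocontractionOn T lam C) (hlam : 0 < lam) (hC : Convex ℝ C) :
    Convex ℝ (C ∩ fixedPoints T) := by
  rw [← fixedPoints_averaged T hlam.ne']
  exact (hT.lipschitzOnWith_averaged hlam.le).convex_inter_fixedPoints hC

end StrictPseudocontraction

section Demiclosedness

variable {H ι : Type*} [NormedAddCommGroup H] [InnerProductSpace ℝ H]

theorem exists_forall_tendsto_inner [CompleteSpace H] (U : Ultrafilter ι) {w : ι → H} {M : ℝ}
    (hM : ∀ i, ‖w i‖ ≤ M) : ∃ v : H, ∀ y, Tendsto (fun i => ⟪w i, y⟫) U (𝓝 ⟪v, y⟫) := by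
  have hbd : ∀ y i, |⟪w i, y⟫| ≤ M * ‖y‖ := fun y i =>
    (abs_real_inner_le_norm _ _).trans (mul_le_mul_of_nonneg_right (hM i) (norm_nonneg y))
  have hlim : ∀ y, ∃ c, Tendsto (fun i => ⟪w i, y⟫) U (𝓝 c) := fun y => by
    obtain ⟨c, -, hc⟩ := (isCompact_Icc (a := -(M * ‖y‖)) (b := M * ‖y‖)).ultrafilter_le_nhds
      (U.map fun i => ⟪w i, y⟫)
      (le_principal_iff.2 (mem_map.2 (univ_mem' fun i => abs_le.1 (hbd y i))))
    exact ⟨c, hc⟩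
  choose Φ hΦ using hlim
  let Φ' : H →L[ℝ] ℝ := LinearMap.mkContinuous
    { toFun := Φ
      map_add' := fun y y' => tendsto_nhds_unique (hΦ (y + y'))
        (by simpa only [inner_add_right] using (hΦ y).add (hΦ y'))
      map_smul' := fun c y => tendsto_nhds_unique (hΦ (c • y))
        (by simpa only [real_inner_smul_right, RingHom.id_apply, smul_eq_mul]
          using (hΦ y).const_mul c) }
    M fun y => by
      rw [Real.norm_eq_abs]
      exact le_of_tendsto (hΦ y).abs (Eventually.of_forall (hbd y))
  refine ⟨(InnerProductSpace.toDual ℝ H).symm Φ', fun y => ?_⟩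
  rw [InnerProductSpace.toDual_symm_apply]
  exact hΦ y

theorem mem_of_forall_tendsto_inner [CompleteSpace H] {l : Filter ι} [l.NeBot] {C : Set H}
    (hCc : IsClosed C) (hCv : Convex ℝ C) {w : ι → H} (hwC : ∀ i, w i ∈ C) {v : H}
    (hv : ∀ y, Tendsto (fun i => ⟪w i, y⟫) l (𝓝 ⟪v, y⟫)) : v ∈ C := by
  by_contra hvC
  obtain ⟨f, r, hfC, hfv⟩ := geometric_hahn_banach_closed_point hCv hCc hvC
  have hf : ∀ y, ⟪y, (InnerProductSpace.toDual ℝ H).symm f⟫ = f y := fun y => by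
    rw [real_inner_comm, InnerProductSpace.toDual_symm_apply]
  have hle : ⟪v, (InnerProductSpace.toDual ℝ H).symm f⟫ ≤ r :=
    le_of_tendsto (hv _) (Eventually.of_forall fun i => by rw [hf]; exact (hfC _ (hwC i)).le)
  rw [hf] at hle
  linarith

theorem LipschitzOnWith.isFixedPt_of_forall_tendsto_inner {l : Filter ι} [l.NeBot] {C : Set H}
    {S : H → H} (hS : LipschitzOnWith 1 S C) {w : ι → H} (hwC : ∀ i, w i ∈ C) {M : ℝ}
    (hM : ∀ i, ‖w i‖ ≤ M) {v : H} (hvC : v ∈ C)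
    (hv : ∀ y, Tendsto (fun i => ⟪w i, y⟫) l (𝓝 ⟪v, y⟫))
    (hw : Tendsto (fun i => ‖w i - S (w i)‖) l (𝓝 0)) : IsFixedPt S v := by
  set e := fun i => ‖w i - S (w i)‖
  -- expand `‖w i - S v‖²` around `v`: the `‖w i - v‖²` terms cancel against `(e i + ‖w i - v‖)²`
  have hbound : ∀ i, ‖v - S v‖ ^ 2 ≤ e i * (e i + 2 * (M + ‖v‖)) - 2 * ⟪w i - v, v - S v⟫ := by
    intro i
    have h1 : ‖w i - S v‖ ≤ e i + ‖w i - v‖ :=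
      calc ‖w i - S v‖ ≤ ‖w i - S (w i)‖ + ‖S (w i) - S v‖ :=
            norm_sub_le_norm_sub_add_norm_sub _ _ _
        _ ≤ e i + ‖w i - v‖ := by
          gcongr
          simpa using hS.norm_sub_le (hwC i) hvC
    have h2 : ‖w i - S v‖ ^ 2 = ‖w i - v‖ ^ 2 + 2 * ⟪w i - v, v - S v⟫ + ‖v - S v‖ ^ 2 := by
      rw [← norm_add_sq_real, sub_add_sub_cancel]
    have h3 : ‖w i - v‖ ≤ M + ‖v‖ := (_root_.norm_sub_le _ _).trans (by linarith [hM i])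
    have h0 : 0 ≤ e i := norm_nonneg _
    nlinarith [pow_le_pow_left₀ (norm_nonneg _) h1 2, norm_nonneg (w i - v)]
  have hinner : Tendsto (fun i => ⟪w i - v, v - S v⟫) l (𝓝 0) := by
    simpa only [inner_sub_left, sub_self] using (hv (v - S v)).sub_const ⟪v, v - S v⟫
  have hlim : Tendsto (fun i => e i * (e i + 2 * (M + ‖v‖)) - 2 * ⟪w i - v, v - S v⟫) l (𝓝 0) := by
    simpa using (hw.mul (hw.add_const (2 * (M + ‖v‖)))).sub (hinner.const_mul 2)
  have hsq : ‖v - S v‖ ^ 2 = 0 := le_antisymm (ge_of_tendsto' hlim hbound) (sq_nonneg _)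
  exact (norm_sub_eq_zero_iff.1 ((pow_eq_zero_iff two_ne_zero).1 hsq)).symm

theorem LipschitzOnWith.eventually_inner_lt [CompleteSpace H] {l : Filter ι} {C : Set H}
    (hCc : IsClosed C) (hCv : Convex ℝ C) {S : H → H} (hS : LipschitzOnWith 1 S C) {u z : H}
    (hz : ∀ p ∈ C ∩ fixedPoints S, ⟪u - z, p - z⟫ ≤ 0) {w : ι → H} (hwC : ∀ i, w i ∈ C)
    {M : ℝ} (hM : ∀ i, ‖w i‖ ≤ M) (hw : Tendsto (fun i => ‖w i - S (w i)‖) l (𝓝 0)) {ε : ℝ}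
    (hε : 0 < ε) : ∀ᶠ i in l, ⟪u - z, w i - z⟫ < ε := by
  by_contra h
  have := frequently_iff_neBot.1 ((not_eventually.1 h).mono fun _ => le_of_not_gt)
  obtain ⟨U, hU⟩ := Ultrafilter.exists_le (l ⊓ 𝓟 {i | ε ≤ ⟪u - z, w i - z⟫})
  have hUε : ∀ᶠ i in (U : Filter ι), ε ≤ ⟪u - z, w i - z⟫ :=
    le_principal_iff.1 (hU.trans inf_le_right)
  obtain ⟨v, hv⟩ := exists_forall_tendsto_inner U hM
  have hvC := mem_of_forall_tendsto_inner hCc hCv hwC hv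
  have hvS :=
    hS.isFixedPt_of_forall_tendsto_inner hwC hM hvC hv (hw.mono_left (hU.trans inf_le_left))
  have hlim : Tendsto (fun i => ⟪u - z, w i - z⟫) U (𝓝 ⟪u - z, v - z⟫) := by
    have hsplit : ∀ y, ⟪u - z, y - z⟫ = ⟪y, u - z⟫ - ⟪z, u - z⟫ := fun y => by
      rw [real_inner_comm, inner_sub_left]
    simpa only [hsplit] using (hv (u - z)).sub_const ⟪z, u - z⟫
  linarith [ge_of_tendsto hlim hUε, hz v ⟨hvC, hvS⟩]

end Demiclosedness

section Mainge

theorem exists_tendsto_atTop_and_lt_succ {a : ℕ → ℝ} (h : ∃ᶠ n in atTop, a n < a (n + 1)) :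
    ∃ τ : ℕ → ℕ, Tendsto τ atTop atTop ∧
      ∀ᶠ n in atTop, a (τ n) < a (τ n + 1) ∧ a n ≤ a (τ n + 1) := by
  classical
  obtain ⟨n₀, hn₀⟩ := h.exists
  refine ⟨fun n => Nat.findGreatest (fun k => a k < a (k + 1)) n,
    tendsto_atTop_atTop.2 fun b => ?_, ?_⟩
  · obtain ⟨m, hbm, hm⟩ := frequently_atTop.1 h b
    exact ⟨m, fun n hn => hbm.trans (Nat.le_findGreatest hn hm)⟩
  filter_upwards [eventually_ge_atTop n₀] with n hn
  set t := Nat.findGreatest (fun k => a k < a (k + 1)) n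
  have hasc : a t < a (t + 1) := Nat.findGreatest_spec (P := fun k => a k < a (k + 1)) hn hn₀
  refine ⟨hasc, ?_⟩
  have hdesc : ∀ m, t + 1 ≤ m → m ≤ n → a m ≤ a (t + 1) := by
    intro m hm
    induction m, hm using Nat.le_induction with
    | base => exact fun _ => le_rfl
    | succ m hm ih =>
      intro hmn
      exact (not_lt.1 (Nat.findGreatest_is_greatest (P := fun k => a k < a (k + 1))
        (show t < m by omega) (by omega))).trans (ih (by omega))
  rcases (show t ≤ n from Nat.findGreatest_le n).eq_or_lt with heq | hlt
  · rw [heq] at hasc ⊢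
    exact hasc.le
  · exact hdesc n hlt le_rfl

theorem not_tendsto_sum_of_eventually_add_mul_le {a β : ℕ → ℝ} {δ : ℝ} (hδ : 0 < δ)
    (ha : ∀ n, 0 ≤ a n) (h : ∀ᶠ n in atTop, a (n + 1) + δ * β n ≤ a n) :
    ¬ Tendsto (fun n => ∑ i ∈ range n, β i) atTop atTop := by
  obtain ⟨N, hN⟩ := eventually_atTop.1 h
  have htel : ∀ m ≥ N, a m + δ * ∑ i ∈ Ico N m, β i ≤ a N := by
    intro m hm
    induction m, hm using Nat.le_induction with
    | base => simp
    | succ m hm ih =>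
      rw [sum_Ico_succ_top hm, mul_add]
      linarith [hN m hm]
  intro hsum
  obtain ⟨m, hm, hNm⟩ :=
    ((hsum.eventually_gt_atTop (∑ i ∈ range N, β i + a N / δ)).and (eventually_ge_atTop N)).exists
  rw [← sum_range_add_sum_Ico _ hNm, add_lt_add_iff_left, div_lt_iff₀' hδ] at hm
  linarith [htel m hNm, ha m]

theorem exists_tendsto_of_eventually_succ_le {a : ℕ → ℝ} (ha : ∀ n, 0 ≤ a n)
    (h : ∀ᶠ n in atTop, a (n + 1) ≤ a n) :
    ∃ l, Tendsto a atTop (𝓝 l) ∧ ∀ᶠ n in atTop, l ≤ a n := by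
  obtain ⟨N, hN⟩ := eventually_atTop.1 h
  have hanti : Antitone fun k => a (k + N) :=
    antitone_nat_of_succ_le fun k => by simpa [add_right_comm] using hN (k + N) (by omega)
  have hlim := tendsto_atTop_ciInf hanti ⟨0, by rintro _ ⟨k, rfl⟩; exact ha _⟩
  refine ⟨_, (tendsto_add_atTop_iff_nat N).1 hlim, ?_⟩
  filter_upwards [eventually_ge_atTop N] with n hn
  simpa [Nat.sub_add_cancel hn] using hanti.le_of_tendsto hlim (n - N)

theorem tendsto_zero_of_le_one_sub_mul_add_mul {a b β : ℕ → ℝ} (ha : ∀ n, 0 ≤ a n)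
    (hβ0 : ∀ n, 0 < β n) (hβ1 : ∀ n, β n ≤ 1)
    (hβsum : Tendsto (fun n => ∑ i ∈ range n, β i) atTop atTop)
    (hab : ∀ n, a (n + 1) ≤ (1 - β n) * a n + β n * b n)
    (hb : ∀ φ : ℕ → ℕ, Tendsto φ atTop atTop → ∀ e : ℕ → ℝ, Tendsto e atTop (𝓝 0) →
      (∀ᶠ k in atTop, a (φ k) - a (φ k + 1) ≤ e k) → ∀ ε > 0, ∀ᶠ k in atTop, b (φ k) < ε) :
    Tendsto a atTop (𝓝 0) := by
  by_cases hfreq : ∃ᶠ n in atTop, a n < a (n + 1)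
  · obtain ⟨τ, hτ, hτa⟩ := exists_tendsto_atTop_and_lt_succ hfreq
    have hbτ := hb τ hτ 0 tendsto_const_nhds (hτa.mono fun n h => by simpa using h.1.le)
    refine tendsto_order.2 ⟨fun ε hε => Eventually.of_forall fun n => hε.trans_le (ha n),
      fun ε hε => ?_⟩
    -- an ascent `a (τ n) < a (τ n + 1)` in the recursion forces `a (τ n + 1) < b (τ n)`
    filter_upwards [hτa, hbτ ε hε] with n ⟨hlt, hle⟩ hbn
    nlinarith [hab (τ n), hβ0 (τ n), hβ1 (τ n)]
  · obtain ⟨l, hl, hla⟩ := exists_tendsto_of_eventually_succ_le ha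
      (by simpa only [not_frequently, not_lt] using hfreq)
    have hb' := hb id tendsto_id (fun n => a n - a (n + 1))
      (by simpa using hl.sub (hl.comp (tendsto_add_atTop_nat 1)))
      (Eventually.of_forall fun _ => le_rfl)
    suffices l = 0 from this ▸ hl
    -- if `l > 0`, eventually `b n < l / 2 ≤ a n - l / 2`, so every step loses `β n * l / 2`
    refine le_antisymm (not_lt.1 fun hl0 => not_tendsto_sum_of_eventually_add_mul_le
      (half_pos hl0) ha ?_ hβsum) (ge_of_tendsto' hl ha)
    filter_upwards [hla, hb' (l / 2) (half_pos hl0)] with n hln hbn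
    simp only [id_eq] at hbn
    nlinarith [hab n, mul_le_mul_of_nonneg_left (show l / 2 ≤ a n - b n by linarith) (hβ0 n).le]

end Mainge

section Iteration

variable {H : Type*} [NormedAddCommGroup H] [InnerProductSpace ℝ H]

theorem norm_smul_add_one_sub_smul_sq_le (a b : H) {t : ℝ} (ht : t ∈ Set.Icc (0 : ℝ) 1) :
    ‖t • a + (1 - t) • b‖ ^ 2 ≤ t * ‖a‖ ^ 2 + (1 - t) * ‖b‖ ^ 2 := by
  rw [norm_add_sq_real, norm_smul, norm_smul, real_inner_smul_left, real_inner_smul_right,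
    Real.norm_of_nonneg ht.1, Real.norm_of_nonneg (sub_nonneg.2 ht.2)]
  nlinarith [mul_nonneg (mul_nonneg ht.1 (sub_nonneg.2 ht.2)) (sq_nonneg (‖a‖ - ‖b‖)),
    mul_le_mul_of_nonneg_left (real_inner_le_norm a b) (mul_nonneg ht.1 (sub_nonneg.2 ht.2))]

def halpernMannStep (T : H → H) (u : H) (α β : ℝ) (x : H) : H :=
  β • u + (1 - β) • (α • T x + (1 - α) • x)

variable {T : H → H} {lam : ℝ} {C : Set H} {u z x : H} {α β : ℝ}

theorem IsStrictPseudocontractionOn.norm_mann_sub_sq_le (hT : IsStrictPseudocontractionOn T lam C)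
    (hx : x ∈ C) (hz : z ∈ C ∩ fixedPoints T) (hα : 0 ≤ α) :
    ‖α • T x + (1 - α) • x - z‖ ^ 2 ≤ ‖x - z‖ ^ 2 - α * (2 * lam - α) * ‖x - T x‖ ^ 2 := by
  have h := hT.norm_sub_smul_sq_le hx hz.1 hα
  rw [hz.2.eq, sub_sub_sub_cancel_right] at h
  rwa [show α • T x + (1 - α) • x - z = x - z - α • (x - T x) by module]

theorem IsStrictPseudocontractionOn.norm_mann_sub_le (hT : IsStrictPseudocontractionOn T lam C)
    (hx : x ∈ C) (hz : z ∈ C ∩ fixedPoints T) (hα : α ∈ Set.Icc 0 (2 * lam)) :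
    ‖α • T x + (1 - α) • x - z‖ ≤ ‖x - z‖ := by
  rw [← pow_le_pow_iff_left₀ (norm_nonneg _) (norm_nonneg _) two_ne_zero]
  nlinarith [hT.norm_mann_sub_sq_le hx hz hα.1,
    mul_nonneg (mul_nonneg hα.1 (sub_nonneg.2 hα.2)) (sq_nonneg ‖x - T x‖)]

theorem IsStrictPseudocontractionOn.norm_halpernMannStep_sub_sq_le
    (hT : IsStrictPseudocontractionOn T lam C)
    (hx : x ∈ C) (hz : z ∈ C ∩ fixedPoints T) (hα : 0 ≤ α) (hβ : β ∈ Set.Icc (0 : ℝ) 1) :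
    ‖halpernMannStep T u α β x - z‖ ^ 2 ≤
      β * ‖u - z‖ ^ 2 + ‖x - z‖ ^ 2 - (1 - β) * (α * (2 * lam - α) * ‖x - T x‖ ^ 2) := by
  rw [show halpernMannStep T u α β x - z = β • (u - z) + (1 - β) • (α • T x + (1 - α) • x - z) by
    unfold halpernMannStep; module]
  nlinarith [norm_smul_add_one_sub_smul_sq_le (u - z) (α • T x + (1 - α) • x - z) hβ,
    mul_le_mul_of_nonneg_left (hT.norm_mann_sub_sq_le hx hz hα) (sub_nonneg.2 hβ.2),
    mul_nonneg hβ.1 (sq_nonneg ‖x - z‖)]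

theorem IsStrictPseudocontractionOn.norm_halpernMannStep_sub_sq_le_inner
    (hT : IsStrictPseudocontractionOn T lam C) (hx : x ∈ C) (hz : z ∈ C ∩ fixedPoints T)
    (hα : α ∈ Set.Icc 0 (2 * lam)) (hβ : β ∈ Set.Icc (0 : ℝ) 1) :
    ‖halpernMannStep T u α β x - z‖ ^ 2 ≤
      (1 - β) * ‖x - z‖ ^ 2 + β * (2 * ⟪u - z, halpernMannStep T u α β x - z⟫) := by
  set y := α • T x + (1 - α) • x - z
  have hy : ‖y‖ ≤ ‖x - z‖ := hT.norm_mann_sub_le hx hz hα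
  rw [show halpernMannStep T u α β x - z = (1 - β) • y + β • (u - z) by
    unfold halpernMannStep; module]
  simp only [norm_add_sq_real, inner_add_right, norm_smul, real_inner_smul_left,
    real_inner_smul_right, real_inner_self_eq_norm_sq, Real.norm_of_nonneg hβ.1,
    Real.norm_of_nonneg (sub_nonneg.2 hβ.2), real_inner_comm y (u - z)]
  nlinarith [pow_le_pow_left₀ (norm_nonneg _) hy 2, hβ.1, hβ.2,
    mul_nonneg hβ.1 (sub_nonneg.2 hβ.2), sq_nonneg β, sq_nonneg ‖u - z‖]

theorem IsStrictPseudocontractionOn.norm_halpernMannStep_sub_le_max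
    (hT : IsStrictPseudocontractionOn T lam C)
    (hx : x ∈ C) (hz : z ∈ C ∩ fixedPoints T) (hα : α ∈ Set.Icc 0 (2 * lam))
    (hβ : β ∈ Set.Icc (0 : ℝ) 1) :
    ‖halpernMannStep T u α β x - z‖ ≤ max ‖x - z‖ ‖u - z‖ := by
  rw [show halpernMannStep T u α β x - z = β • (u - z) + (1 - β) • (α • T x + (1 - α) • x - z) by
    unfold halpernMannStep; module, ← mem_closedBall_zero_iff]
  refine convex_closedBall 0 _ ?_ ?_ hβ.1 (sub_nonneg.2 hβ.2) (by ring) <;>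
    rw [mem_closedBall_zero_iff]
  · exact le_max_right _ _
  · exact (hT.norm_mann_sub_le hx hz hα).trans (le_max_left _ _)

theorem norm_halpernMannStep_sub_le (hα : α ∈ Set.Icc 0 (2 * lam)) (hβ : β ∈ Set.Icc (0 : ℝ) 1) :
    ‖halpernMannStep T u α β x - x‖ ≤ β * ‖u - x‖ + 2 * lam * ‖x - T x‖ := by
  rw [show halpernMannStep T u α β x - x = β • (u - x) + ((1 - β) * α) • (T x - x) by
    unfold halpernMannStep; module]
  refine (norm_add_le _ _).trans ?_
  rw [norm_smul, norm_smul, norm_sub_rev (T x), Real.norm_of_nonneg hβ.1,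
    Real.norm_of_nonneg (mul_nonneg (sub_nonneg.2 hβ.2) hα.1)]
  have hcoef : (1 - β) * α ≤ 2 * lam := by nlinarith [hβ.1, hα.1, hα.2]
  exact add_le_add le_rfl (mul_le_mul_of_nonneg_right hcoef (norm_nonneg _))

end Iteration

section Sequence

variable {H : Type*} [NormedAddCommGroup H] [InnerProductSpace ℝ H] {T : H → H} {lam : ℝ}
  {C : Set H} {u z : H} {α β : ℕ → ℝ} {x : ℕ → H}

theorem IsStrictPseudocontractionOn.norm_sub_le_max (hT : IsStrictPseudocontractionOn T lam C)
    (hα : ∀ n, α n ∈ Set.Icc 0 (2 * lam)) (hβ : ∀ n, β n ∈ Set.Ioo (0 : ℝ) 1)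
    (hxC : ∀ n, x n ∈ C) (hrec : ∀ n, x (n + 1) = halpernMannStep T u (α n) (β n) (x n))
    (hz : z ∈ C ∩ fixedPoints T) (n : ℕ) : ‖x n - z‖ ≤ max ‖x 0 - z‖ ‖u - z‖ := by
  induction n with
  | zero => exact le_max_left _ _
  | succ n ih =>
    rw [hrec]
    exact (hT.norm_halpernMannStep_sub_le_max (hxC n) hz (hα n)
      (Set.Ioo_subset_Icc_self (hβ n))).trans (max_le ih (le_max_right _ _))

theorem IsStrictPseudocontractionOn.norm_succ_sub_sq_le (hT : IsStrictPseudocontractionOn T lam C)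
    (hα : ∀ n, α n ∈ Set.Icc 0 (2 * lam)) (hβ : ∀ n, β n ∈ Set.Ioo (0 : ℝ) 1)
    (hxC : ∀ n, x n ∈ C) (hrec : ∀ n, x (n + 1) = halpernMannStep T u (α n) (β n) (x n))
    (hz : z ∈ C ∩ fixedPoints T) (n : ℕ) :
    ‖x (n + 1) - z‖ ^ 2 ≤ (1 - β n) * ‖x n - z‖ ^ 2 + β n * (2 * ⟪u - z, x (n + 1) - z⟫) := by
  rw [hrec]
  exact hT.norm_halpernMannStep_sub_sq_le_inner (hxC n) hz (hα n) (Set.Ioo_subset_Icc_self (hβ n))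

theorem IsStrictPseudocontractionOn.tendsto_norm_sub_apply_comp
    (hT : IsStrictPseudocontractionOn T lam C) (hα : ∀ n, α n ∈ Set.Icc 0 (2 * lam))
    (hliminf : 0 < liminf (fun n => α n * (2 * lam - α n)) atTop)
    (hβ : ∀ n, β n ∈ Set.Ioo (0 : ℝ) 1) (hβ0 : Tendsto β atTop (𝓝 0)) (hxC : ∀ n, x n ∈ C)
    (hrec : ∀ n, x (n + 1) = halpernMannStep T u (α n) (β n) (x n))
    (hz : z ∈ C ∩ fixedPoints T) {φ : ℕ → ℕ} (hφ : Tendsto φ atTop atTop) {e : ℕ → ℝ}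
    (he : Tendsto e atTop (𝓝 0))
    (hae : ∀ᶠ k in atTop, ‖x (φ k) - z‖ ^ 2 - ‖x (φ k + 1) - z‖ ^ 2 ≤ e k) :
    Tendsto (fun k => ‖x (φ k) - T (x (φ k))‖) atTop (𝓝 0) := by
  set δ := liminf (fun n => α n * (2 * lam - α n)) atTop
  have hαδ : ∀ᶠ n in atTop, δ / 2 < α n * (2 * lam - α n) :=
    eventually_lt_of_lt_liminf (by linarith)
      (isBoundedUnder_of ⟨0, fun n => mul_nonneg (hα n).1 (sub_nonneg.2 (hα n).2)⟩)
  have hβ2 : ∀ᶠ n in atTop, β n < 1 / 2 := hβ0.eventually_lt_const one_half_pos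
  have hsq : Tendsto (fun k => ‖x (φ k) - T (x (φ k))‖ ^ 2) atTop (𝓝 0) := by
    refine squeeze_zero' (Eventually.of_forall fun k => sq_nonneg _) ?_
      (by simpa using (((hβ0.comp hφ).mul_const (‖u - z‖ ^ 2)).add he).const_mul (4 / δ))
    filter_upwards [hφ.eventually hαδ, hφ.eventually hβ2, hae] with k hαk hβk hek
    have hstep := hT.norm_halpernMannStep_sub_sq_le (u := u) (hxC (φ k)) hz (hα (φ k)).1
      (Set.Ioo_subset_Icc_self (hβ (φ k)))
    rw [← hrec] at hstep
    set s := ‖x (φ k) - T (x (φ k))‖ ^ 2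
    set c := α (φ k) * (2 * lam - α (φ k))
    have h1 : δ / 2 * s ≤ c * s := mul_le_mul_of_nonneg_right hαk.le (sq_nonneg _)
    have h2 : 1 / 2 * (c * s) ≤ (1 - β (φ k)) * (c * s) :=
      mul_le_mul_of_nonneg_right (by linarith)
        (mul_nonneg (mul_nonneg (hα _).1 (sub_nonneg.2 (hα _).2)) (sq_nonneg _))
    rw [div_mul_eq_mul_div, le_div_iff₀ hliminf]
    linarith
  simpa using hsq.sqrt

theorem tendsto_norm_succ_sub_comp (hα : ∀ n, α n ∈ Set.Icc 0 (2 * lam))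
    (hβ : ∀ n, β n ∈ Set.Ioo (0 : ℝ) 1) (hβ0 : Tendsto β atTop (𝓝 0))
    (hrec : ∀ n, x (n + 1) = halpernMannStep T u (α n) (β n) (x n)) {R : ℝ}
    (hR : ∀ n, ‖x n - z‖ ≤ R) {φ : ℕ → ℕ} (hφ : Tendsto φ atTop atTop)
    (hxT : Tendsto (fun k => ‖x (φ k) - T (x (φ k))‖) atTop (𝓝 0)) :
    Tendsto (fun k => ‖x (φ k + 1) - x (φ k)‖) atTop (𝓝 0) := by
  refine squeeze_zero (fun _ => norm_nonneg _) (fun k => ?_)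
    (by simpa using ((hβ0.comp hφ).mul_const (‖u - z‖ + R)).add (hxT.const_mul (2 * lam)))
  have hux : ‖u - x (φ k)‖ ≤ ‖u - z‖ + R := by
    linarith [norm_sub_le_norm_sub_add_norm_sub u z (x (φ k)), norm_sub_rev z (x (φ k)), hR (φ k)]
  rw [hrec]
  refine (norm_halpernMannStep_sub_le (hα _) (Set.Ioo_subset_Icc_self (hβ _))).trans ?_
  nlinarith [(hβ (φ k)).1]

theorem IsStrictPseudocontractionOn.eventually_inner_succ_lt [CompleteSpace H]
    (hCc : IsClosed C) (hCv : Convex ℝ C) (hT : IsStrictPseudocontractionOn T lam C)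
    (hlam : 0 < lam) (hα : ∀ n, α n ∈ Set.Icc 0 (2 * lam))
    (hliminf : 0 < liminf (fun n => α n * (2 * lam - α n)) atTop)
    (hβ : ∀ n, β n ∈ Set.Ioo (0 : ℝ) 1) (hβ0 : Tendsto β atTop (𝓝 0)) (hxC : ∀ n, x n ∈ C)
    (hrec : ∀ n, x (n + 1) = halpernMannStep T u (α n) (β n) (x n))
    (hz : z ∈ C ∩ fixedPoints T) (hproj : ∀ p ∈ C ∩ fixedPoints T, ⟪u - z, p - z⟫ ≤ 0)
    {φ : ℕ → ℕ} (hφ : Tendsto φ atTop atTop) {e : ℕ → ℝ} (he : Tendsto e atTop (𝓝 0))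
    (hae : ∀ᶠ k in atTop, ‖x (φ k) - z‖ ^ 2 - ‖x (φ k + 1) - z‖ ^ 2 ≤ e k) {ε : ℝ}
    (hε : 0 < ε) : ∀ᶠ k in atTop, 2 * ⟪u - z, x (φ k + 1) - z⟫ < ε := by
  have hR := hT.norm_sub_le_max hα hβ hxC hrec hz
  have hxT := hT.tendsto_norm_sub_apply_comp hα hliminf hβ hβ0 hxC hrec hz hφ he hae
  have hxS : Tendsto (fun k => ‖x (φ k) - (lam • T (x (φ k)) + (1 - lam) • x (φ k))‖) atTop
      (𝓝 0) := by
    have hS : ∀ w : H, w - (lam • T w + (1 - lam) • w) = lam • (w - T w) := fun w => by module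
    simpa [hS, norm_smul, abs_of_pos hlam] using hxT.const_mul lam
  have hnear := (hT.lipschitzOnWith_averaged hlam.le).eventually_inner_lt hCc hCv
    (by rwa [fixedPoints_averaged T hlam.ne']) (fun k => hxC (φ k))
    (fun k => (norm_le_insert' (x (φ k)) z).trans (add_le_add_right (hR (φ k)) _)) hxS
    (by linarith : 0 < ε / 4)
  have hstep := ((tendsto_norm_succ_sub_comp hα hβ hβ0 hrec hR hφ hxT).const_mul
    ‖u - z‖).eventually_lt_const (by linarith : ‖u - z‖ * 0 < ε / 4)
  filter_upwards [hnear, hstep] with k hnear hstep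
  have hsplit : ⟪u - z, x (φ k + 1) - z⟫ =
      ⟪u - z, x (φ k) - z⟫ + ⟪u - z, x (φ k + 1) - x (φ k)⟫ := by
    rw [← inner_add_right, sub_add_sub_cancel']
  linarith [real_inner_le_norm (u - z) (x (φ k + 1) - x (φ k))]

end Sequence

theorem stmt_10_general {H : Type*} [NormedAddCommGroup H] [InnerProductSpace ℝ H] [CompleteSpace H]
    (C : Set H) (hCc : IsClosed C) (hCv : Convex ℝ C)
    (T : H → H) (lam : ℝ) (hlam : lam ∈ Set.Ioo (0:ℝ) 1)
    (hT : ∀ x ∈ C, ∀ y ∈ C,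
      (inner ℝ (T x - T y) (x - y) : ℝ) ≤ ‖x - y‖ ^ 2 - lam * ‖(x - y) - (T x - T y)‖ ^ 2)
    (hF : ∃ p ∈ C, T p = p)
    (u : H)
    (α β : ℕ → ℝ)
    (hα : ∀ n, α n ∈ Set.Icc (0:ℝ) (2 * lam))
    (hliminf : 0 < Filter.liminf (fun n => α n * (2 * lam - α n)) Filter.atTop)
    (hβ : ∀ n, β n ∈ Set.Ioo (0:ℝ) 1)
    (hβ0 : Filter.Tendsto β Filter.atTop (nhds 0))
    (hβsum : Filter.Tendsto (fun n => ∑ i ∈ Finset.range n, β i) Filter.atTop Filter.atTop)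
    (x : ℕ → H) (hxC : ∀ n, x n ∈ C)
    (hrec : ∀ n, x (n + 1) =
      β n • u + (1 - β n) • (α n • T (x n) + (1 - α n) • x n)) :
    ∃ z ∈ C, T z = z ∧ Filter.Tendsto x Filter.atTop (nhds z) := by
  have hT' : IsStrictPseudocontractionOn T lam C := hT
  have hFv := hT'.convex_inter_fixedPoints hlam.1 hCv
  obtain ⟨z, hz, hmin⟩ := exists_norm_eq_iInf_of_complete_convex hF
    (hT'.isClosed_inter_fixedPoints hlam.1 hCc).isComplete hFv u
  have hproj := (norm_eq_iInf_iff_real_inner_le_zero hFv hz).1 hmin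
  refine ⟨z, hz.1, hz.2, tendsto_iff_norm_sub_tendsto_zero.2 ?_⟩
  have hsq : Tendsto (fun n => ‖x n - z‖ ^ 2) atTop (𝓝 0) :=
    tendsto_zero_of_le_one_sub_mul_add_mul (b := fun n => 2 * ⟪u - z, x (n + 1) - z⟫)
      (fun n => sq_nonneg _) (fun n => (hβ n).1) (fun n => (hβ n).2.le) hβsum
      (hT'.norm_succ_sub_sq_le hα hβ hxC hrec hz)
      fun φ hφ e he hae ε hε => hT'.eventually_inner_succ_lt hCc hCv hlam.1 hα hliminf hβ hβ0
        hxC hrec hz hproj hφ he hae hε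
  simpa using hsq.sqrt

theorem stmt_10 {H : Type*} [NormedAddCommGroup H] [InnerProductSpace ℝ H] [CompleteSpace H]
    (C : Set H) (hCc : IsClosed C) (hCv : Convex ℝ C)
    (T : H → H) (hTC : ∀ x ∈ C, T x ∈ C) (lam : ℝ) (hlam : lam ∈ Set.Ioo (0:ℝ) 1)
    (hT : ∀ x ∈ C, ∀ y ∈ C,
      (inner ℝ (T x - T y) (x - y) : ℝ) ≤ ‖x - y‖ ^ 2 - lam * ‖(x - y) - (T x - T y)‖ ^ 2)
    (hF : ∃ p ∈ C, T p = p)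
    (u x₀ : H) (hu : u ∈ C) (hx₀ : x₀ ∈ C)
    (α β : ℕ → ℝ)
    (hα : ∀ n, α n ∈ Set.Icc (0:ℝ) (2 * lam))
    (hliminf : 0 < Filter.liminf (fun n => α n * (2 * lam - α n)) Filter.atTop)
    (hβ : ∀ n, β n ∈ Set.Ioo (0:ℝ) 1)
    (hβ0 : Filter.Tendsto β Filter.atTop (nhds 0))
    (hβsum : Filter.Tendsto (fun n => ∑ i ∈ Finset.range n, β i) Filter.atTop Filter.atTop)
    (x : ℕ → H) (hx0 : x 0 = x₀) (hxC : ∀ n, x n ∈ C)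
    (hrec : ∀ n, x (n + 1) =
      β n • u + (1 - β n) • (α n • T (x n) + (1 - α n) • x n)) :
    ∃ z ∈ C, T z = z ∧ Filter.Tendsto x Filter.atTop (nhds z) :=
  stmt_10_general C hCc hCv T lam hlam hT hF u α β hα hliminf hβ hβ0 hβsum x hxC hrec
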